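/- Let n ∈ ℕ, let g : ℝⁿ → ℝⁿ and φ : ℝⁿ → ℝ be infinitely differentiable, and let ψ : ℝⁿ → ℂ be infinitely differentiable. Define the differential operators L and L⁺ by (Lψ)(x) = −Σⱼ gⱼ(x)∂ⱼψ(x) − ½(Σⱼ ∂ⱼgⱼ(x))·ψ(x) and (L⁺ψ)(x) = Σⱼ gⱼ(x)∂ⱼψ(x) + ½(Σⱼ ∂ⱼgⱼ(x))·ψ(x) (L is L_{c1} = −igᵀp − ½∇ᵀg and L⁺ its formal adjoint). Then for all x ∈ ℝⁿ, ½·L⁺( φ·(Lψ) − L(φ·ψ) )(x) + ½·( L⁺(φ·(Lψ))(x) − φ(x)·L⁺(Lψ)(x) ) = ½·( Σⱼ gⱼ(x) ∂ⱼ( Σₖ gₖ ∂ₖφ )(x) )·ψ(x); that is, the Lindblad superoperator 𝓛_L applied to multiplication by φ acts as multiplication by ½ gᵀ∇(gᵀ∇φ). -/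

import Mathlib

noncomputable section

/-- The `j`-th partial derivative of a complex-valued function on `ℝⁿ`. -/
def pderivC {n : ℕ} (j : Fin n) (ψ : (Fin n → ℝ) → ℂ) : (Fin n → ℝ) → ℂ :=
  fun x => fderiv ℝ ψ x (Pi.single j 1)

/-- The `j`-th partial derivative of a real-valued function on `ℝⁿ`. -/
def pderivR {n : ℕ} (j : Fin n) (φ : (Fin n → ℝ) → ℝ) : (Fin n → ℝ) → ℝ :=
  fun x => fderiv ℝ φ x (Pi.single j 1)

/-- The coupling operator `L = L_{c1} = −igᵀp − ½∇ᵀg` (with `pⱼ = −i∂ⱼ`), acting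
on smooth functions: `(Lψ)(x) = −Σⱼ gⱼ(x)∂ⱼψ(x) − ½(Σⱼ ∂ⱼgⱼ(x))ψ(x)`. -/
def Lop {n : ℕ} (g : (Fin n → ℝ) → (Fin n → ℝ)) (ψ : (Fin n → ℝ) → ℂ) :
    (Fin n → ℝ) → ℂ :=
  fun x => -(∑ j, (g x j : ℂ) * pderivC j ψ x) -
    (2 : ℂ)⁻¹ * ((∑ j, pderivR j (fun y => g y j) x : ℝ) : ℂ) * ψ x

/-- The formal adjoint `L⁺` of `L_{c1}`:
`(L⁺ψ)(x) = Σⱼ gⱼ(x)∂ⱼψ(x) + ½(Σⱼ ∂ⱼgⱼ(x))ψ(x)`. -/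
def LopAdj {n : ℕ} (g : (Fin n → ℝ) → (Fin n → ℝ)) (ψ : (Fin n → ℝ) → ℂ) :
    (Fin n → ℝ) → ℂ :=
  fun x => (∑ j, (g x j : ℂ) * pderivC j ψ x) +
    (2 : ℂ)⁻¹ * ((∑ j, pderivR j (fun y => g y j) x : ℝ) : ℂ) * ψ x


section Aux
variable {n : ℕ}

lemma contDiff_pderivC (j : Fin n) {ψ : (Fin n → ℝ) → ℂ} (hψ : ContDiff ℝ (⊤ : ℕ∞) ψ) :
    ContDiff ℝ (⊤ : ℕ∞) (pderivC j ψ) :=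
  (ContinuousLinearMap.apply ℝ ℂ (Pi.single j 1 : Fin n → ℝ)).contDiff.comp
    (hψ.fderiv_right (by simp))

lemma contDiff_pderivR (j : Fin n) {φ : (Fin n → ℝ) → ℝ} (hφ : ContDiff ℝ (⊤ : ℕ∞) φ) :
    ContDiff ℝ (⊤ : ℕ∞) (pderivR j φ) :=
  (ContinuousLinearMap.apply ℝ ℝ (Pi.single j 1 : Fin n → ℝ)).contDiff.comp
    (hφ.fderiv_right (by simp))

lemma pderivC_ofReal_mul (j : Fin n) {u : (Fin n → ℝ) → ℝ} {χ : (Fin n → ℝ) → ℂ}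
    {x : Fin n → ℝ} (hu : DifferentiableAt ℝ u x) (hχ : DifferentiableAt ℝ χ x) :
    pderivC j (fun y => (u y : ℂ) * χ y) x
      = (u x : ℂ) * pderivC j χ x + (pderivR j u x : ℂ) * χ x := by
  have hu' : DifferentiableAt ℝ (fun y => (u y : ℂ)) x :=
    Complex.ofRealCLM.differentiable.differentiableAt.comp x hu
  unfold pderivC pderivR
  rw [fderiv_fun_mul hu' hχ]
  have : fderiv ℝ (fun y => (u y : ℂ)) x
      = Complex.ofRealCLM.comp (fderiv ℝ u x) :=
    (Complex.ofRealCLM.hasFDerivAt.comp x hu.hasFDerivAt).fderiv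
  simp [this]
  ring

lemma LopAdj_eq_neg (g : (Fin n → ℝ) → (Fin n → ℝ)) (χ : (Fin n → ℝ) → ℂ)
    (x : Fin n → ℝ) : LopAdj g χ x = -Lop g χ x := by
  simp [Lop, LopAdj]; ring

lemma contDiff_Lop {g : (Fin n → ℝ) → (Fin n → ℝ)} {ψ : (Fin n → ℝ) → ℂ}
    (hg : ContDiff ℝ (⊤ : ℕ∞) g) (hψ : ContDiff ℝ (⊤ : ℕ∞) ψ) : ContDiff ℝ (⊤ : ℕ∞) (Lop g ψ) := by
  have hcomp : ∀ j : Fin n, ContDiff ℝ (⊤ : ℕ∞) fun x => g x j := fun j =>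
    (contDiff_apply ℝ ℝ j).comp hg
  have h1 : ContDiff ℝ (⊤ : ℕ∞) fun x => ∑ j, (g x j : ℂ) * pderivC j ψ x :=
    ContDiff.sum fun j _ =>
      (Complex.ofRealCLM.contDiff.comp (hcomp j)).mul (contDiff_pderivC j hψ)
  have h2 : ContDiff ℝ (⊤ : ℕ∞) fun x => ((∑ j, pderivR j (fun y => g y j) x : ℝ) : ℂ) := by
    have hsum : ContDiff ℝ (⊤ : ℕ∞) fun x => ∑ j, pderivR j (fun y => g y j) x :=
      ContDiff.sum fun j _ => contDiff_pderivR j (hcomp j)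
    exact Complex.ofRealCLM.contDiff.comp hsum
  exact (h1.neg.sub ((contDiff_const.mul h2).mul hψ))

lemma Lop_mul (g : (Fin n → ℝ) → (Fin n → ℝ)) {u : (Fin n → ℝ) → ℝ}
    {χ : (Fin n → ℝ) → ℂ} {x : Fin n → ℝ}
    (hu : DifferentiableAt ℝ u x) (hχ : DifferentiableAt ℝ χ x) :
    Lop g (fun y => (u y : ℂ) * χ y) x
      = (u x : ℂ) * Lop g χ x - ((∑ j, g x j * pderivR j u x : ℝ) : ℂ) * χ x := by
  unfold Lop
  have hrw : ∀ j : Fin n, (g x j : ℂ) * pderivC j (fun y => (u y : ℂ) * χ y) x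
      = (u x : ℂ) * ((g x j : ℂ) * pderivC j χ x)
        + ((g x j : ℝ) * pderivR j u x : ℝ) * χ x := by
    intro j
    rw [pderivC_ofReal_mul j hu hχ]
    push_cast
    ring
  rw [Finset.sum_congr rfl fun j _ => hrw j, Finset.sum_add_distrib, ← Finset.mul_sum]
  push_cast [← Finset.sum_mul]
  ring

end Aux

/- Gough–James, Appendix D: the Lindblad superoperator `𝓛_{L_{c1}}` applied to
multiplication by `φ` acts as multiplication by `½ gᵀ∇(gᵀ∇φ)`:
`½L⁺[φ,L]ψ + ½[L⁺,φ](Lψ) = ½ (gᵀ∇(gᵀ∇φ)) ψ` pointwise. -/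
theorem lindblad_diffusion {n : ℕ} (g : (Fin n → ℝ) → (Fin n → ℝ))
    (φ : (Fin n → ℝ) → ℝ) (ψ : (Fin n → ℝ) → ℂ)
    (hg : ContDiff ℝ (⊤ : ℕ∞) g) (hφ : ContDiff ℝ (⊤ : ℕ∞) φ) (hψ : ContDiff ℝ (⊤ : ℕ∞) ψ)
    (x : Fin n → ℝ) :
    (2 : ℂ)⁻¹ * LopAdj g (fun y => (φ y : ℂ) * Lop g ψ y - Lop g (fun z => (φ z : ℂ) * ψ z) y) x +
      (2 : ℂ)⁻¹ * (LopAdj g (fun y => (φ y : ℂ) * Lop g ψ y) x -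
        (φ x : ℂ) * LopAdj g (Lop g ψ) x) =
      (2 : ℂ)⁻¹ *
        ((∑ j, g x j * pderivR j (fun y => ∑ k, g y k * pderivR k φ y) x : ℝ) : ℂ) *
        ψ x := by
  have hcomp : ∀ j : Fin n, ContDiff ℝ (⊤ : ℕ∞) fun x => g x j := fun j =>
    (contDiff_apply ℝ ℝ j).comp hg
  have ha : ContDiff ℝ (⊤ : ℕ∞) fun y => ∑ k, g y k * pderivR k φ y :=
    ContDiff.sum fun k _ => (hcomp k).mul (contDiff_pderivR k hφ)
  have hL : ContDiff ℝ (⊤ : ℕ∞) (Lop g ψ) := contDiff_Lop hg hψ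
  have key : (fun y => (φ y : ℂ) * Lop g ψ y - Lop g (fun z => (φ z : ℂ) * ψ z) y)
      = fun y => ((∑ k, g y k * pderivR k φ y : ℝ) : ℂ) * ψ y := by
    funext y
    rw [Lop_mul g (hφ.differentiable (by simp) y) (hψ.differentiable (by simp) y)]
    ring
  rw [key, LopAdj_eq_neg, LopAdj_eq_neg, LopAdj_eq_neg,
    Lop_mul g (ha.differentiable (by simp) x) (hψ.differentiable (by simp) x),
    Lop_mul g (hφ.differentiable (by simp) x) (hL.differentiable (by simp) x)]
  ring
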